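/- On ℝ⁷ with the standard G₂ 3-form φ, for a linear endomorphism A of ℝ⁷ define the alternating 3-form A·φ by (A·φ)(x,y,z) = φ(Ax,y,z) + φ(x,Ay,z) + φ(x,y,Az). Then the space g₂ := {A : A skew-symmetric and A·φ = 0} (the Lie algebra of the stabilizer G₂ of φ) has dimension 14 as a real vector space. -/

import Mathlib

/-! Pairs of distinct indices of ℤ/7 fall into seven triples: those `(a, b)` with
`φ(e_a, e_b, e_k) = 1`, for `k ∈ ℤ/7`. For `A ∈ g₂` with entries `a_{ab} = ⟨e_a, A e_b⟩`,
the equation `(A·φ)(e_{k+1}, e_{k+2}, e_{k+5}) = 0` says that the three entries of triple `k` sum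
to zero, so the first two entries of each triple determine `A` and `dim g₂ ≤ 14`. Conversely, for
`p`, `q` in the same triple, the difference `R_p - R_q` of the infinitesimal rotations in the
planes `p` and `q` lies in `g₂`, and these 14 elements are linearly independent. -/

open scoped BigOperators

noncomputable section

/-- ℝ⁷ as the space of functions `Fin 7 → ℝ` (indices in ℤ/7ℤ). -/
abbrev V7 : Type := Fin 7 → ℝ

/-- The standard inner product on ℝ⁷. -/
def ip7 (x y : V7) : ℝ := ∑ i, x i * y i

/-- The standard orthonormal basis vector `e_i`. -/
def e7 (i : Fin 7) : V7 := fun j => if j = i then 1 else 0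

/-- The G₂ fundamental 3-form `φ = ∑_{i∈ℤ/7} eⁱ ∧ e^{i+1} ∧ e^{i+3}`
(each wedge of covectors in the determinant convention). -/
def φ7 (x y z : V7) : ℝ :=
  ∑ i : Fin 7,
    (x i * y (i + 1) * z (i + 3) - x i * y (i + 3) * z (i + 1)
      - x (i + 1) * y i * z (i + 3) + x (i + 1) * y (i + 3) * z i
      + x (i + 3) * y i * z (i + 1) - x (i + 3) * y (i + 1) * z i)

/-- The 4-form `∗φ = −∑_{i∈ℤ/7} e^{i+2} ∧ e^{i+4} ∧ e^{i+5} ∧ e^{i+6}`. -/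
def sφ7 (x y z u : V7) : ℝ :=
  -∑ i : Fin 7,
    Matrix.det !![x (i + 2), x (i + 4), x (i + 5), x (i + 6);
                  y (i + 2), y (i + 4), y (i + 5), y (i + 6);
                  z (i + 2), z (i + 4), z (i + 5), z (i + 6);
                  u (i + 2), u (i + 4), u (i + 5), u (i + 6)]

lemma φ7_add₁ (u v y z : V7) : φ7 (u + v) y z = φ7 u y z + φ7 v y z := by
  simp only [φ7, Pi.add_apply, ← Finset.sum_add_distrib]
  exact Finset.sum_congr rfl fun i _ => by ring

lemma φ7_add₂ (x u v z : V7) : φ7 x (u + v) z = φ7 x u z + φ7 x v z := by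
  simp only [φ7, Pi.add_apply, ← Finset.sum_add_distrib]
  exact Finset.sum_congr rfl fun i _ => by ring

lemma φ7_add₃ (x y u v : V7) : φ7 x y (u + v) = φ7 x y u + φ7 x y v := by
  simp only [φ7, Pi.add_apply, ← Finset.sum_add_distrib]
  exact Finset.sum_congr rfl fun i _ => by ring

lemma φ7_smul₁ (c : ℝ) (u y z : V7) : φ7 (c • u) y z = c * φ7 u y z := by
  simp only [φ7, Pi.smul_apply, smul_eq_mul, Finset.mul_sum]
  exact Finset.sum_congr rfl fun i _ => by ring

lemma φ7_smul₂ (c : ℝ) (x u z : V7) : φ7 x (c • u) z = c * φ7 x u z := by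
  simp only [φ7, Pi.smul_apply, smul_eq_mul, Finset.mul_sum]
  exact Finset.sum_congr rfl fun i _ => by ring

lemma φ7_smul₃ (c : ℝ) (x y u : V7) : φ7 x y (c • u) = c * φ7 x y u := by
  simp only [φ7, Pi.smul_apply, smul_eq_mul, Finset.mul_sum]
  exact Finset.sum_congr rfl fun i _ => by ring

lemma ip7_add_left (u v y : V7) : ip7 (u + v) y = ip7 u y + ip7 v y := by
  simp only [ip7, Pi.add_apply, ← Finset.sum_add_distrib]
  exact Finset.sum_congr rfl fun i _ => by ring

lemma ip7_add_right (x u v : V7) : ip7 x (u + v) = ip7 x u + ip7 x v := by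
  simp only [ip7, Pi.add_apply, ← Finset.sum_add_distrib]
  exact Finset.sum_congr rfl fun i _ => by ring

lemma ip7_smul_left (c : ℝ) (u y : V7) : ip7 (c • u) y = c * ip7 u y := by
  simp only [ip7, Pi.smul_apply, smul_eq_mul, Finset.mul_sum]
  exact Finset.sum_congr rfl fun i _ => by ring

lemma ip7_smul_right (c : ℝ) (x u : V7) : ip7 x (c • u) = c * ip7 x u := by
  simp only [ip7, Pi.smul_apply, smul_eq_mul, Finset.mul_sum]
  exact Finset.sum_congr rfl fun i _ => by ring

/-- The Lie algebra `g₂` of the stabilizer of `φ`: skew-symmetric endomorphisms `A`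
of ℝ⁷ with `A·φ = 0`, where `(A·φ)(x,y,z) = φ(Ax,y,z) + φ(x,Ay,z) + φ(x,y,Az)`. -/
def g2 : Submodule ℝ (V7 →ₗ[ℝ] V7) where
  carrier := {A | (∀ x y : V7, ip7 (A x) y = -ip7 x (A y)) ∧
    (∀ x y z : V7, φ7 (A x) y z + φ7 x (A y) z + φ7 x y (A z) = 0)}
  zero_mem' := by
    constructor <;> intros <;> simp [ip7, φ7]
  add_mem' := by
    rintro A B ⟨hA1, hA2⟩ ⟨hB1, hB2⟩
    refine ⟨fun x y => ?_, fun x y z => ?_⟩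
    · rw [LinearMap.add_apply, ip7_add_left, LinearMap.add_apply, ip7_add_right]
      have h1 := hA1 x y
      have h2 := hB1 x y
      linarith
    · rw [LinearMap.add_apply, LinearMap.add_apply, LinearMap.add_apply,
        φ7_add₁, φ7_add₂, φ7_add₃]
      have h1 := hA2 x y z
      have h2 := hB2 x y z
      linarith
  smul_mem' := by
    rintro c A ⟨hA1, hA2⟩
    refine ⟨fun x y => ?_, fun x y z => ?_⟩
    · rw [LinearMap.smul_apply, ip7_smul_left, LinearMap.smul_apply, ip7_smul_right]
      have h1 := hA1 x y
      linear_combination c * h1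
    · rw [LinearMap.smul_apply, LinearMap.smul_apply, LinearMap.smul_apply,
        φ7_smul₁, φ7_smul₂, φ7_smul₃]
      have h1 := hA2 x y z
      linear_combination c * h1


lemma e7_eq_single (a : Fin 7) : e7 a = Pi.single a 1 := by
  funext j
  simp [e7, Pi.single_apply]

lemma ip7_e7_left (a : Fin 7) (y : V7) : ip7 (e7 a) y = y a := by
  simp [ip7, e7]

lemma ip7_e7_right (x : V7) (a : Fin 7) : ip7 x (e7 a) = x a := by
  simp [ip7, e7]

lemma ip7_sub_left (u v y : V7) : ip7 (u - v) y = ip7 u y - ip7 v y := by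
  simp [ip7, sub_mul, Finset.sum_sub_distrib]

lemma ip7_sub_right (x u v : V7) : ip7 x (u - v) = ip7 x u - ip7 x v := by
  simp [ip7, mul_sub, Finset.sum_sub_distrib]

def rot (p : Fin 7 × Fin 7) : V7 →ₗ[ℝ] V7 :=
  (LinearMap.proj p.2).smulRight (e7 p.1) - (LinearMap.proj p.1).smulRight (e7 p.2)

lemma rot_apply (p : Fin 7 × Fin 7) (x : V7) : rot p x = x p.2 • e7 p.1 - x p.1 • e7 p.2 := rfl

lemma rot_apply_apply (p : Fin 7 × Fin 7) (x : V7) (j : Fin 7) :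
    rot p x j = (if j = p.1 then x p.2 else 0) - if j = p.2 then x p.1 else 0 := by
  simp [rot_apply, e7]

lemma rot_skew (p : Fin 7 × Fin 7) (x y : V7) : ip7 (rot p x) y = -ip7 x (rot p y) := by
  simp only [rot_apply, sub_eq_add_neg, ← neg_smul, ip7_add_left, ip7_add_right, ip7_smul_left,
    ip7_smul_right, ip7_e7_left, ip7_e7_right]
  ring

def entry (p : Fin 7 × Fin 7) : (V7 →ₗ[ℝ] V7) →ₗ[ℝ] ℝ :=
  LinearMap.proj p.1 ∘ₗ LinearMap.applyₗ (e7 p.2)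

lemma entry_apply (p : Fin 7 × Fin 7) (A : V7 →ₗ[ℝ] V7) : entry p A = A (e7 p.2) p.1 := rfl

lemma entry_rot (p q : Fin 7 × Fin 7) :
    entry q (rot p) = (if q = p then 1 else 0) - if q = p.swap then 1 else 0 := by
  obtain ⟨a, b⟩ := p
  obtain ⟨c, d⟩ := q
  simp only [entry_apply, rot_apply_apply, e7, Prod.mk.injEq, Prod.swap_prod_mk]
  grind

/-- The oriented pairs `(a, b)` with `φ(e_a, e_b, e_k) = 1`: the lines of the Fano plane
through `k`, with `k` removed. -/
def fanoPair (k : Fin 7) : Fin 3 → Fin 7 × Fin 7 :=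
  ![(k + 1, k + 3), (k + 2, k + 6), (k + 4, k + 5)]

lemma fanoPair_injective : Function.Injective fun q : Fin 7 × Fin 3 => fanoPair q.1 q.2 := by
  decide

lemma fanoPair_ne_swap (k l : Fin 7) (i j : Fin 3) : fanoPair k i ≠ (fanoPair l j).swap := by
  revert k l i j
  decide

lemma exists_fanoPair (a b : Fin 7) (hab : a ≠ b) :
    ∃ k i, fanoPair k i = (a, b) ∨ fanoPair k i = (b, a) := by
  revert a b
  decide

lemma entry_swap_of_mem {A : V7 →ₗ[ℝ] V7} (hA : A ∈ g2) (p : Fin 7 × Fin 7) :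
    entry p.swap A = -entry p A := by
  have h := hA.1 (e7 p.2) (e7 p.1)
  rw [ip7_e7_right, ip7_e7_left] at h
  simp only [entry_apply, Prod.fst_swap, Prod.snd_swap]
  linarith

lemma sum_entry_fanoPair_eq_zero {A : V7 →ₗ[ℝ] V7} (hA : A ∈ g2) (k : Fin 7) :
    ∑ i, entry (fanoPair k i) A = 0 := by
  have h := hA.2 (e7 (k + 1)) (e7 (k + 2)) (e7 (k + 5))
  have h₀ := entry_swap_of_mem hA (fanoPair k 0)
  have h₁ := entry_swap_of_mem hA (fanoPair k 1)
  fin_cases k <;>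
    simp [φ7, e7, Fin.sum_univ_seven, Fin.sum_univ_three, fanoPair, entry_apply] at h h₀ h₁ ⊢ <;>
    linarith

lemma eq_zero_of_entry_fanoPair {A : V7 →ₗ[ℝ] V7} (hA : A ∈ g2)
    (h : ∀ k i, entry (fanoPair k i) A = 0) : A = 0 := by
  have hentry : ∀ p, entry p A = 0 := by
    rintro ⟨a, b⟩
    by_cases hab : a = b
    · subst hab
      have h_diag := entry_swap_of_mem hA (a, a)
      rw [Prod.swap_prod_mk] at h_diag
      linarith
    obtain ⟨k, i, hki | hki⟩ := exists_fanoPair a b hab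
    · rw [← hki, h]
    · have h_swap := entry_swap_of_mem hA (fanoPair k i)
      rwa [h, neg_zero, hki, Prod.swap_prod_mk] at h_swap
  refine (Pi.basisFun ℝ (Fin 7)).ext fun b => funext fun a => ?_
  rw [Pi.basisFun_apply, ← e7_eq_single]
  exact hentry (a, b)

set_option maxHeartbeats 1000000 in
lemma rot_sub_rot_mem (k : Fin 7) (i : Fin 2) :
    rot (fanoPair k i.castSucc) - rot (fanoPair k 2) ∈ g2 := by
  refine ⟨fun x y => ?_, fun x y z => ?_⟩
  · simp only [LinearMap.sub_apply, ip7_sub_left, ip7_sub_right, rot_skew]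
    ring
  · fin_cases k <;> fin_cases i <;>
      simp [fanoPair, φ7, Fin.sum_univ_seven, rot_apply_apply] <;> ring

def g2Gen (q : Fin 7 × Fin 2) : g2 :=
  ⟨rot (fanoPair q.1 q.2.castSucc) - rot (fanoPair q.1 2), rot_sub_rot_mem q.1 q.2⟩

def g2Coord : g2 →ₗ[ℝ] Fin 7 × Fin 2 → ℝ :=
  LinearMap.pi fun q => entry (fanoPair q.1 q.2.castSucc) ∘ₗ g2.subtype

lemma g2Coord_apply (A : g2) (q : Fin 7 × Fin 2) :
    g2Coord A q = entry (fanoPair q.1 q.2.castSucc) A := rfl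

lemma g2Coord_injective : Function.Injective g2Coord := by
  refine (injective_iff_map_eq_zero _).2 fun A hA => Subtype.ext ?_
  refine eq_zero_of_entry_fanoPair A.2 fun k i => ?_
  have h₀ : entry (fanoPair k 0) A = 0 := congrFun hA (k, 0)
  have h₁ : entry (fanoPair k 1) A = 0 := congrFun hA (k, 1)
  have h_sum := sum_entry_fanoPair_eq_zero A.2 k
  rw [Fin.sum_univ_three, h₀, h₁, zero_add, zero_add] at h_sum
  fin_cases i
  exacts [h₀, h₁, h_sum]

lemma g2Coord_g2Gen (q : Fin 7 × Fin 2) : g2Coord (g2Gen q) = Pi.single q 1 := by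
  funext q'
  have h_last : fanoPair q'.1 q'.2.castSucc ≠ fanoPair q.1 2 := fun h =>
    Fin.castSucc_ne_last q'.2 (congrArg Prod.snd (@fanoPair_injective (_, _) (_, 2) h))
  have h_eq : fanoPair q'.1 q'.2.castSucc = fanoPair q.1 q.2.castSucc ↔ q' = q := by
    refine ⟨fun h => ?_, fun h => h ▸ rfl⟩
    obtain ⟨hk, hi⟩ := Prod.ext_iff.1 (@fanoPair_injective (_, _) (_, _) h)
    exact Prod.ext hk (Fin.castSucc_injective _ hi)
  simp [g2Coord_apply, g2Gen, entry_rot, fanoPair_ne_swap, h_last, h_eq, Pi.single_apply]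

lemma g2Gen_linearIndependent : LinearIndependent ℝ g2Gen := by
  refine LinearIndependent.of_comp g2Coord ?_
  convert (Pi.basisFun ℝ (Fin 7 × Fin 2)).linearIndependent
  ext1 q
  simp [g2Coord_g2Gen]

/-- `g₂` has dimension 14 as a real vector space. -/
theorem g2_finrank : Module.finrank ℝ g2 = 14 := by
  have h_card : Fintype.card (Fin 7 × Fin 2) = 14 := rfl
  refine le_antisymm ?_ ?_
  · simpa [h_card] using LinearMap.finrank_le_finrank_of_injective g2Coord_injective
  · simpa [h_card] using g2Gen_linearIndependent.fintype_card_le_finrank
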